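/- If S ⊆ S' ⊆ sing_ω(κ), then E(T_{S'}) is Borel reducible to E(T_S). -/

import Mathlib

open Cardinal Set Order

/-- A node of the tree `2^{<κ}`: a binary sequence with domain `Iio dom`. -/
structure PNode (X : Type) [LinearOrder X] where
  dom : X
  val : X → Bool
  val_eq_false : ∀ b, ¬ b < dom → val b = false

variable {X : Type} [LinearOrder X]

/-- Restriction of a binary sequence to `Iio a`. -/
def res (f : X → Bool) (a : X) : X → Bool := fun b => if b < a then f b else false

/-- The node obtained by restricting `η` to `Iio a`. -/
def nodeRes (η : X → Bool) (a : X) : PNode X := ⟨a, res η a, fun _ hb => if_neg hb⟩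

/-- `q` end-extends `p`. -/
def PNode.Ext (q p : PNode X) : Prop := p.dom ≤ q.dom ∧ ∀ b < p.dom, q.val b = p.val b

/-- A subset of `2^{<κ}` is a tree if it is closed under restriction. -/
def DownClosed (T : Set (PNode X)) : Prop := ∀ p ∈ T, ∀ q, p.Ext q → q ∈ T

/-- The weak `S`-Kurepa tree determined by the predicate
`InL a s` = "`s ∈ L_{f(a)}`", where `f(a)` is the least limit ordinal `β` with
`L_β ⊨ a singular`. -/
def TS (S : Set X) (InL : X → (X → Bool) → Prop) : Set (PNode X) :=
  {p | ∀ a ≤ p.dom, a ∈ S → InL a (res p.val a)}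

/-- `η ∈ 2^κ` is a branch (of length `κ`) of `T`. -/
def IsBranch (T : Set (PNode X)) (η : X → Bool) : Prop := ∀ a : X, nodeRes η a ∈ T

/-- Basic open set determined by a node. -/
def Npset (p : PNode X) : Set (X → Bool) := {η | ∀ b < p.dom, η b = p.val b}

/-- κ-Borel subsets of `2^κ`. -/
inductive KBorel (X : Type) [LinearOrder X] : Set (X → Bool) → Prop
  | basic (p : PNode X) : KBorel X (Npset p)
  | compl {s : Set (X → Bool)} : KBorel X s → KBorel X sᶜ
  | iUnion {ι : Type} (hι : #ι ≤ #X) (f : ι → Set (X → Bool)) :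
      (∀ i, KBorel X (f i)) → KBorel X (⋃ i, f i)

/-- A Borel function on `2^κ`. -/
def IsKBorelFun (f : (X → Bool) → (X → Bool)) : Prop :=
  ∀ s, KBorel X s → KBorel X (f ⁻¹' s)

/-- Borel reducibility of binary relations on `2^κ`. -/
def BReducible (E F : (X → Bool) → (X → Bool) → Prop) : Prop :=
  ∃ f, IsKBorelFun f ∧ ∀ η ξ, E η ξ ↔ F (f η) (f ξ)

/-- κ-Borel subsets of `2^κ × 2^κ`. -/
inductive KBorel2 (X : Type) [LinearOrder X] : Set ((X → Bool) × (X → Bool)) → Prop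
  | basic (p q : PNode X) : KBorel2 X (Npset p ×ˢ Npset q)
  | compl {s} : KBorel2 X s → KBorel2 X sᶜ
  | iUnion {ι : Type} (hι : #ι ≤ #X) (f : ι → Set ((X → Bool) × (X → Bool))) :
      (∀ i, KBorel2 X (f i)) → KBorel2 X (⋃ i, f i)

/-- A Borel equivalence relation on `2^κ`. -/
def IsBorelER (E : (X → Bool) → (X → Bool) → Prop) : Prop :=
  Equivalence E ∧ KBorel2 X {z | E z.1 z.2}

/-- The equivalence relation `E(T)`: two sequences are equivalent iff they are equal
or neither is a branch of `T`. -/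
def ETrel (T : Set (PNode X)) (η ξ : X → Bool) : Prop :=
  η = ξ ∨ (¬ IsBranch T η ∧ ¬ IsBranch T ξ)

/-- A club (closed unbounded) subset of `κ` (represented by the type `X`). -/
def IsClubX (C : Set X) : Prop :=
  (∀ a : X, ∃ b ∈ C, a < b) ∧
    ∀ a : X, IsSuccLimit a → (∀ b < a, ∃ c ∈ C, b < c ∧ c < a) → a ∈ C

/-- A stationary subset of `κ`. -/
def IsStatX (S : Set X) : Prop := ∀ C, IsClubX C → (S ∩ C).Nonempty

/-- `g` is a continuous (strictly) increasing sequence of order type `c` (its domain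
being `Iio c`). -/
def IsContIncrOn (g : X → X) (c : X) : Prop :=
  StrictMonoOn g (Iio c) ∧ ∀ b < c, IsSuccLimit b → IsLUB (g '' Iio b) (g b)

/-- A fat subset of `κ`: together with any club it contains continuous increasing
sequences of every order type `< κ`. -/
def IsFatX (S : Set X) : Prop :=
  ∀ C, IsClubX C → ∀ c : X, ∃ g, IsContIncrOn g c ∧ ∀ b < c, g b ∈ S ∩ C

/-- `a` has cofinality `ω`: it is a limit with a countable cofinal subset. -/
def CofOmega (a : X) : Prop :=
  IsSuccLimit a ∧ ∃ g : ℕ → X, (∀ n, g n < a) ∧ ∀ b < a, ∃ n, b ≤ g n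

/-- `a` represents a cardinal: every proper initial segment has smaller cardinality. -/
def IsCardinalElt (a : X) : Prop := ∀ b < a, #(Iio b) < #(Iio a)

/-- `a` represents an `ω`-cofinal singular (uncountable) cardinal. -/
def IsSingOmegaCard (a : X) : Prop := IsCardinalElt a ∧ ℵ₀ < #(Iio a) ∧ CofOmega a

/-- The relation `E_0`: eventual agreement. -/
def E0rel (η ξ : X → Bool) : Prop := ∃ b : X, ∀ c, b ≤ c → η c = ξ c

/-- The relation `E_S` of [Kul]. -/
def ESrel (S : Set X) (η ξ : X → Bool) : Prop :=
  E0rel η ξ ∧ ∀ a ∈ S, ∃ b < a, ∀ c, b ≤ c → c < a → ((η c = ξ c) ↔ (η b = ξ b))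

/-!
Since `S ⊆ S'`, every branch of `T_{S'}` is a branch of `T_S`. Hence the map fixing the branches of
`T_{S'}` and sending every other sequence to one fixed non-branch of `T_{S'}` reduces `E(T_{S'})` to
`E(T_S)`. It is Borel because, `κ` being a strong limit, the set of branches of any tree is the
intersection of `κ` many unions of fewer than `κ` basic open sets.
-/

namespace KBorel

theorem empty : KBorel X ∅ := by
  simpa using KBorel.iUnion (X := X) (by simp) (fun i : PEmpty => ∅) (fun i => i.elim)

theorem univ : KBorel X univ := by
  simpa using (empty (X := X)).compl

variable {s t u : Set (X → Bool)}

theorem union (h2 : 2 ≤ #X) (hs : KBorel X s) (ht : KBorel X t) : KBorel X (s ∪ t) := by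
  have : s ∪ t = ⋃ i : Bool, cond i s t := by
    ext; simp [or_comm]
  rw [this]
  exact KBorel.iUnion (by rwa [mk_bool]) _ fun i => by cases i <;> assumption

theorem inter (h2 : 2 ≤ #X) (hs : KBorel X s) (ht : KBorel X t) : KBorel X (s ∩ t) := by
  simpa using (union h2 hs.compl ht.compl).compl

theorem ite (h2 : 2 ≤ #X) (ht : KBorel X t) (hs : KBorel X s) (hu : KBorel X u) :
    KBorel X (t.ite s u) :=
  union h2 (inter h2 hs ht) (inter h2 hu ht.compl)

end KBorel

namespace IsKBorelFun

theorem id : IsKBorelFun (X := X) fun η => η := fun _ hs => hs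

theorem const (ξ : X → Bool) : IsKBorelFun (X := X) fun _ => ξ := by
  classical
  intro s _
  rw [preimage_const]
  split_ifs
  exacts [KBorel.univ, KBorel.empty]

theorem piecewise (h2 : 2 ≤ #X) {B : Set (X → Bool)} [DecidablePred (· ∈ B)]
    {f g : (X → Bool) → (X → Bool)} (hB : KBorel X B) (hf : IsKBorelFun f)
    (hg : IsKBorelFun g) : IsKBorelFun (B.piecewise f g) := fun s hs => by
  rw [piecewise_preimage]
  exact KBorel.ite h2 hB (hf s hs) (hg s hs)

end IsKBorelFun

theorem mem_Npset_nodeRes (η : X → Bool) (a : X) : η ∈ Npset (nodeRes η a) :=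
  fun _ hb => (if_pos hb).symm

theorem nodeRes_dom_eq_of_mem_Npset {η : X → Bool} {p : PNode X} (h : η ∈ Npset p) :
    nodeRes η p.dom = p := by
  obtain ⟨a, v, hv⟩ := p
  show PNode.mk a (res η a) _ = PNode.mk a v hv
  congr 1
  funext b
  by_cases hb : b < a
  · simp [res, hb, h b hb]
  · simp [res, hb, hv b hb]

theorem setOf_nodeRes_mem_eq_iUnion (T : Set (PNode X)) (a : X) :
    {η | nodeRes η a ∈ T} = ⋃ p : {p : PNode X // p.dom = a ∧ p ∈ T}, Npset p.1 := by
  ext η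
  simp only [mem_ofPred_eq, mem_iUnion]
  constructor
  · exact fun h => ⟨⟨nodeRes η a, rfl, h⟩, mem_Npset_nodeRes η a⟩
  · rintro ⟨⟨p, rfl, hp⟩, hη⟩
    rwa [nodeRes_dom_eq_of_mem_Npset hη]

theorem mk_pnode_dom_eq_le (a : X) : #{p : PNode X // p.dom = a} ≤ 2 ^ #(Iio a) := by
  rw [← mk_bool, power_def]
  refine mk_le_of_injective (f := fun p b => p.1.val b.1) ?_
  rintro ⟨⟨d, v, hv⟩, rfl⟩ ⟨⟨d', w, hw⟩, hd⟩ h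
  obtain rfl : d = d' := hd.symm
  simp only [Subtype.mk.injEq, PNode.mk.injEq, true_and]
  funext b
  by_cases hb : b < d
  · exact congrFun h ⟨b, hb⟩
  · rw [hv b hb, hw b hb]

theorem KBorel.setOf_isBranch (hX : ∀ a : X, 2 ^ #(Iio a) ≤ #X) (T : Set (PNode X)) :
    KBorel X {η | IsBranch T η} := by
  have : {η | IsBranch T η} = (⋃ a : X, {η | nodeRes η a ∈ T}ᶜ)ᶜ := by
    ext; simp [IsBranch]
  rw [this]
  refine (KBorel.iUnion le_rfl _ fun a => KBorel.compl ?_).compl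
  rw [setOf_nodeRes_mem_eq_iUnion]
  refine KBorel.iUnion ?_ _ fun p => KBorel.basic p.1
  exact (mk_subtype_mono fun p hp => hp.1).trans ((mk_pnode_dom_eq_le a).trans (hX a))

theorem IsBranch.mono {T T' : Set (PNode X)} (h : T' ⊆ T) {η : X → Bool} (hη : IsBranch T' η) :
    IsBranch T η :=
  fun a => h (hη a)

theorem TS_anti {S S' : Set X} (h : S ⊆ S') (InL : X → (X → Bool) → Prop) :
    TS S' InL ⊆ TS S InL :=
  fun _ hp a ha haS => hp a ha (h haS)

theorem bReducible_ETrel_of_subset (h2 : 2 ≤ #X) {T T' : Set (PNode X)} (hT : T' ⊆ T)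
    (hB : KBorel X {η | IsBranch T' η}) : BReducible (ETrel T') (ETrel T) := by
  classical
  obtain ⟨ξ₀, hξ₀⟩ : ∃ ξ₀, ∀ ζ, ¬ IsBranch T' ζ → ¬ IsBranch T' ξ₀ :=
    ⟨Classical.epsilon fun ζ => ¬ IsBranch T' ζ,
      fun ζ hζ => Classical.epsilon_spec (p := fun ζ => ¬ IsBranch T' ζ) ⟨ζ, hζ⟩⟩
  refine ⟨{η | IsBranch T' η}.piecewise (fun η => η) fun _ => ξ₀,
    IsKBorelFun.piecewise h2 hB IsKBorelFun.id (IsKBorelFun.const ξ₀), fun η ξ => ?_⟩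
  by_cases hη : IsBranch T' η <;> by_cases hξ : IsBranch T' ξ <;>
    simp only [ETrel, piecewise, mem_ofPred_eq, hη, hξ, if_true, if_false] <;>
    grind [IsBranch.mono]

theorem statement11_general (κ : Cardinal) (hin : κ.IsInaccessible)
    (InL : κ.ord.ToType → (κ.ord.ToType → Bool) → Prop)
    (S S' : Set κ.ord.ToType) (hSS' : S ⊆ S') :
    BReducible (ETrel (TS S' InL)) (ETrel (TS S InL)) := by
  have h2 : 2 ≤ #κ.ord.ToType := by
    rw [mk_ord_toType]
    exact (natCast_lt_aleph0 (n := 2)).le.trans hin.aleph0_lt.le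
  have hpow : ∀ a : κ.ord.ToType, 2 ^ #(Iio a) ≤ #κ.ord.ToType := fun a => by
    have ha : #(Iio a) < κ := by simpa using mk_Iio_lt a (by simp)
    rw [mk_ord_toType]
    exact (hin.isStrongPrelimit ha).le
  exact bReducible_ETrel_of_subset h2 (TS_anti hSS' InL) (KBorel.setOf_isBranch hpow _)

/-- V = L, κ inaccessible: if `S ⊆ S' ⊆ sing_ω(κ)` then
`E(T_{S'}) ≤_B E(T_S)`. -/
theorem statement11 (κ : Cardinal) (hin : κ.IsInaccessible)
    (InL : κ.ord.ToType → (κ.ord.ToType → Bool) → Prop)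
    (S S' : Set κ.ord.ToType) (hS' : ∀ a ∈ S', IsSingOmegaCard a) (hSS' : S ⊆ S') :
    BReducible (ETrel (TS S' InL)) (ETrel (TS S InL)) :=
  statement11_general κ hin InL S S' hSS'
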